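/- arXiv:1604.02530 — 14 statements merged into one kernel-verified Lean document; each statement's English description precedes it below -/
import Mathlib

section
/- Suppose y(f) ≠ 0 and y(f+δ) ≠ 0, that L₂(f) = 0, which (since the ȳ-term drops out at x = f) reads (f-g-v)·y(f+δ) = (f-g)·y(f), and that for some ǧ ∈ ℂ the backward-shifted third Lax relation holds at x = f+δ, namely A(f)·(f-ǧ)·y(f+δ) = B(f)·(f-ǧ-v-δ)·y(f). Then the first d-E₇⁽¹⁾ evolution equation holds: (f-g-v)·(f-ǧ-v-δ)·B(f) = (f-g)·(f-ǧ)·A(f). -/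
theorem mul_eq_mul_of_mul_eq_mul_of_mul_eq_mul {R : Type*} [CommRing R] [NoZeroDivisors R]
    {p q r s x y : R} (hx : x ≠ 0) (h₁ : p * y = q * x) (h₂ : r * y = s * x) :
    p * s = q * r :=
  mul_right_cancel₀ hx (by linear_combination r * h₁ - p * h₂)

theorem dE7_first_evolution_equation_general
    (δ : ℂ)
    (v : ℂ)
    (A B : ℂ → ℂ)
    (f g gcheck : ℂ) (y : ℂ → ℂ)
    (hy0 : y f ≠ 0)
    (hL2 : (f - g - v) * y (f + δ) = (f - g) * y f)
    (hL3 : A f * (f - gcheck) * y (f + δ) = B f * (f - gcheck - v - δ) * y f) :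
    (f - g - v) * (f - gcheck - v - δ) * B f = (f - g) * (f - gcheck) * A f := by
  linear_combination mul_eq_mul_of_mul_eq_mul_of_mul_eq_mul hy0 hL2 hL3

/-- At `x = f`, eliminating `y(x)` and `y(x+δ)` from `L₂(x) = 0` and the
backward-shifted third Lax relation gives the first d-E₇⁽¹⁾ evolution equation. -/
theorem dE7_first_evolution_equation
    (δ a₁ a₂ a₃ a₄ b₁ b₂ b₃ b₄ : ℂ)
    (hcons : a₁ - a₂ - a₃ + a₄ + b₁ + b₂ - b₃ + b₄ + δ = 0)
    (v : ℂ) (hv : v = a₁ + a₄ - b₃)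
    (A B : ℂ → ℂ)
    (hA : ∀ x, A x = (x - a₁) * (x - a₂) * (x - a₃) * (x - a₄))
    (hB : ∀ x, B x = (x - b₁) * (x - b₂) * (x - b₃) * (x - b₄))
    (f g gcheck : ℂ) (y : ℂ → ℂ)
    (hy0 : y f ≠ 0) (hy1 : y (f + δ) ≠ 0)
    (hL2 : (f - g - v) * y (f + δ) = (f - g) * y f)
    (hL3 : A f * (f - gcheck) * y (f + δ) = B f * (f - gcheck - v - δ) * y f) :
    (f - g - v) * (f - gcheck - v - δ) * B f = (f - g) * (f - gcheck) * A f :=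
  dE7_first_evolution_equation_general δ v A B f g gcheck y hy0 hL2 hL3
end

section
/- Suppose v·(v-δ) ≠ 0, y(g+δ) ≠ 0, y(g+v) ≠ 0, and that the four Lax relations L₂(g) = 0, L₃(g+δ) = 0, L₂(g+v) = 0 and L₃(g+v) = 0 hold. Then the second d-E₇⁽¹⁾ evolution equation holds: (f-g-v)·(f̄-g-v+δ)·B(g) = (f-g)·(f̄-g)·A(g+v). -/
/-!
At `x = g` and `x = g + v` one of the three coefficients of `L₂` vanishes, so `L₂ = 0` expresses
`ȳ` through `y` there; at `x = g + δ` and `x = g + v` one of the three terms of `L₃` vanishes, so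
`L₃ = 0` relates `w·y` to `ȳ`. Eliminating `ȳ` and `y` gives
`w (f-g)(f̄-g) = v(v-δ) B(g)` and `w (f-g-v)(f̄-g-v+δ) = v(v-δ) A(g+v)`,
and comparing the two eliminates `w`.
-/

noncomputable section

/-- `A(x) = (x-a₁)(x-a₂)(x-a₃)(x-a₄)`. -/
def Apoly (a₁ a₂ a₃ a₄ x : ℂ) : ℂ := (x - a₁) * (x - a₂) * (x - a₃) * (x - a₄)

/-- `B(x) = (x-b₁)(x-b₂)(x-b₃)(x-b₄)`. -/
def Bpoly (b₁ b₂ b₃ b₄ x : ℂ) : ℂ := (x - b₁) * (x - b₂) * (x - b₃) * (x - b₄)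

/-- `L₂(x) = (x-f)·ȳ(x) - (x-g-v)·y(x+δ) + (x-g)·y(x)`. -/
def L2 (δ v f g : ℂ) (y ybar : ℂ → ℂ) (x : ℂ) : ℂ :=
  (x - f) * ybar x - (x - g - v) * y (x + δ) + (x - g) * y x

/-- `L₃(x) = w·(x-f̄-δ)·y(x) + A(x)·(x-g-δ)·ȳ(x) - B(x-δ)·(x-g-v)·ȳ(x-δ)`. -/
def L3 (δ v f g fbar w a₁ a₂ a₃ a₄ b₁ b₂ b₃ b₄ : ℂ) (y ybar : ℂ → ℂ) (x : ℂ) : ℂ :=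
  w * (x - fbar - δ) * y x + Apoly a₁ a₂ a₃ a₄ x * (x - g - δ) * ybar x
    - Bpoly b₁ b₂ b₃ b₄ (x - δ) * (x - g - v) * ybar (x - δ)

theorem mul_eq_mul_of_mul_eq_mul_of_ne_zero {M : Type*} [CommMonoidWithZero M]
    [IsLeftCancelMulZero M]
    {w c x y a b : M} (hc : c ≠ 0) (hx : w * x = c * b) (hy : w * y = c * a) :
    y * b = x * a :=
  mul_left_cancel₀ hc <| calc
    c * (y * b) = y * (w * x) := by rw [hx]; ac_rfl
    _ = x * (w * y) := by ac_rfl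
    _ = c * (x * a) := by rw [hy]; ac_rfl

theorem mul_eq_of_eliminate_ybar {K : Type*} [CommRing K] [IsDomain K]
    {δ v w p q P Y Ybar : K} (hY : Y ≠ 0) (h₂ : p * Ybar = v * Y)
    (h₃ : w * q * Y = (v - δ) * P * Ybar) :
    w * (p * q) = v * (v - δ) * P :=
  mul_right_cancel₀ hY (by linear_combination p * h₃ + (v - δ) * P * h₂)

section LaxRelations

variable {δ v f g fbar w a₁ a₂ a₃ a₄ b₁ b₂ b₃ b₄ : ℂ} {y ybar : ℂ → ℂ}

theorem mul_ybar_eq_of_L2_g (h : L2 δ v f g y ybar g = 0) :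
    (f - g) * ybar g = v * y (g + δ) := by
  unfold L2 at h
  linear_combination -h

theorem mul_ybar_eq_of_L2_g_add_v (h : L2 δ v f g y ybar (g + v) = 0) :
    (f - g - v) * ybar (g + v) = v * y (g + v) := by
  unfold L2 at h
  linear_combination -h

theorem mul_y_eq_of_L3_g_add_δ
    (h : L3 δ v f g fbar w a₁ a₂ a₃ a₄ b₁ b₂ b₃ b₄ y ybar (g + δ) = 0) :
    w * (fbar - g) * y (g + δ) = (v - δ) * Bpoly b₁ b₂ b₃ b₄ g * ybar g := by
  simp only [L3, add_sub_cancel_right] at h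
  linear_combination -h

theorem mul_y_eq_of_L3_g_add_v
    (h : L3 δ v f g fbar w a₁ a₂ a₃ a₄ b₁ b₂ b₃ b₄ y ybar (g + v) = 0) :
    w * (fbar - g - v + δ) * y (g + v) = (v - δ) * Apoly a₁ a₂ a₃ a₄ (g + v) * ybar (g + v) := by
  unfold L3 at h
  linear_combination -h

end LaxRelations

theorem dE7_second_evolution_equation_general
    (δ a₁ a₂ a₃ a₄ b₁ b₂ b₃ b₄ : ℂ)
    (v : ℂ)
    (f g fbar w : ℂ) (y ybar : ℂ → ℂ)
    (hvv : v * (v - δ) ≠ 0)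
    (hy1 : y (g + δ) ≠ 0) (hy2 : y (g + v) ≠ 0)
    (hL2g : L2 δ v f g y ybar g = 0)
    (hL3gd : L3 δ v f g fbar w a₁ a₂ a₃ a₄ b₁ b₂ b₃ b₄ y ybar (g + δ) = 0)
    (hL2gv : L2 δ v f g y ybar (g + v) = 0)
    (hL3gv : L3 δ v f g fbar w a₁ a₂ a₃ a₄ b₁ b₂ b₃ b₄ y ybar (g + v) = 0) :
    (f - g - v) * (fbar - g - v + δ) * Bpoly b₁ b₂ b₃ b₄ g
      = (f - g) * (fbar - g) * Apoly a₁ a₂ a₃ a₄ (g + v) := by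
  have at_g : w * ((f - g) * (fbar - g)) = v * (v - δ) * Bpoly b₁ b₂ b₃ b₄ g :=
    mul_eq_of_eliminate_ybar hy1 (mul_ybar_eq_of_L2_g hL2g) (mul_y_eq_of_L3_g_add_δ hL3gd)
  have at_g_add_v :
      w * ((f - g - v) * (fbar - g - v + δ)) = v * (v - δ) * Apoly a₁ a₂ a₃ a₄ (g + v) :=
    mul_eq_of_eliminate_ybar hy2 (mul_ybar_eq_of_L2_g_add_v hL2gv)
      (mul_y_eq_of_L3_g_add_v hL3gv)
  exact mul_eq_mul_of_mul_eq_mul_of_ne_zero hvv at_g at_g_add_v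

/-- the four Lax relations at `x = g, g+δ, g+v` yield the second
d-E₇⁽¹⁾ evolution equation. -/
theorem dE7_second_evolution_equation
    (δ a₁ a₂ a₃ a₄ b₁ b₂ b₃ b₄ : ℂ)
    (hcons : a₁ - a₂ - a₃ + a₄ + b₁ + b₂ - b₃ + b₄ + δ = 0)
    (v : ℂ) (hv : v = a₁ + a₄ - b₃)
    (f g fbar w : ℂ) (y ybar : ℂ → ℂ)
    (hvv : v * (v - δ) ≠ 0)
    (hy1 : y (g + δ) ≠ 0) (hy2 : y (g + v) ≠ 0)
    (hL2g : L2 δ v f g y ybar g = 0)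
    (hL3gd : L3 δ v f g fbar w a₁ a₂ a₃ a₄ b₁ b₂ b₃ b₄ y ybar (g + δ) = 0)
    (hL2gv : L2 δ v f g y ybar (g + v) = 0)
    (hL3gv : L3 δ v f g fbar w a₁ a₂ a₃ a₄ b₁ b₂ b₃ b₄ y ybar (g + v) = 0) :
    (f - g - v) * (fbar - g - v + δ) * Bpoly b₁ b₂ b₃ b₄ g
      = (f - g) * (fbar - g) * Apoly a₁ a₂ a₃ a₄ (g + v) :=
  dE7_second_evolution_equation_general δ a₁ a₂ a₃ a₄ b₁ b₂ b₃ b₄ v f g fbar w y ybar hvv hy1 hy2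
    hL2g hL3gd hL2gv hL3gv

end
end

section
/- Fix x ∈ ℂ with x ∉ {f, f+δ, g+v, g+δ}. If L₂(x) = 0, L₂(x-δ) = 0 and L₃(x) = 0, then L₁(x) = 0, where L₁(x) := A(x)/(x-f)·y(x+δ) + B(x-δ)/(x-f-δ)·y(x-δ) - (1/(x-g-v))·[ A(x)·(x-g)/(x-f) + V(x-δ)/((x-f-δ)(x-g-δ)) ]·y(x) and V(x) := B(x)·(x-g-v)·(x-g-v+δ) - w·(x-f)·(x-f̄). Moreover, substituting ȳ(x) = [(x-g-v)y(x+δ) - (x-g)y(x)]/(x-f) and ȳ(x-δ) = [(x-g-v-δ)y(x) - (x-g-δ)y(x-δ)]/(x-f-δ) into L₃(x) yields exactly (x-g-v)·(x-g-δ)·L₁(x). -/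
noncomputable section

/-- `V(x) = B(x)·(x-g-v)·(x-g-v+δ) - w·(x-f)·(x-f̄)`. -/
def Vpoly (δ v f g fbar w b₁ b₂ b₃ b₄ x : ℂ) : ℂ :=
  Bpoly b₁ b₂ b₃ b₄ x * (x - g - v) * (x - g - v + δ) - w * (x - f) * (x - fbar)

/-- The d-E₇⁽¹⁾ Lax operator
`L₁(x) = A(x)/(x-f)·y(x+δ) + B(x-δ)/(x-f-δ)·y(x-δ)
  - (1/(x-g-v))·[A(x)(x-g)/(x-f) + V(x-δ)/((x-f-δ)(x-g-δ))]·y(x)`. -/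
def L1 (δ v f g fbar w a₁ a₂ a₃ a₄ b₁ b₂ b₃ b₄ : ℂ) (y : ℂ → ℂ) (x : ℂ) : ℂ :=
  Apoly a₁ a₂ a₃ a₄ x / (x - f) * y (x + δ)
    + Bpoly b₁ b₂ b₃ b₄ (x - δ) / (x - f - δ) * y (x - δ)
    - (1 / (x - g - v)) * (Apoly a₁ a₂ a₃ a₄ x * (x - g) / (x - f)
        + Vpoly δ v f g fbar w b₁ b₂ b₃ b₄ (x - δ) / ((x - f - δ) * (x - g - δ))) * y x

section Elimination

variable {δ v f g : ℂ} {y ybar : ℂ → ℂ} {x : ℂ}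

lemma ybar_eq_of_L2_eq_zero (hf : x - f ≠ 0) (h : L2 δ v f g y ybar x = 0) :
    ybar x = ((x - g - v) * y (x + δ) - (x - g) * y x) / (x - f) := by
  rw [eq_div_iff hf]
  unfold L2 at h
  linear_combination h

lemma ybar_sub_eq_of_L2_sub_eq_zero (hfd : x - f - δ ≠ 0) (h : L2 δ v f g y ybar (x - δ) = 0) :
    ybar (x - δ) = ((x - g - v - δ) * y x - (x - g - δ) * y (x - δ)) / (x - f - δ) := by
  rw [eq_div_iff hfd]
  unfold L2 at h
  rw [sub_add_cancel] at h
  linear_combination h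

end Elimination

lemma L3_subst_eq_mul_L1 (δ v f g fbar w a₁ a₂ a₃ a₄ b₁ b₂ b₃ b₄ : ℂ) (y : ℂ → ℂ) {x : ℂ}
    (hf : x - f ≠ 0) (hfd : x - f - δ ≠ 0) (hgv : x - g - v ≠ 0) (hgd : x - g - δ ≠ 0) :
    w * (x - fbar - δ) * y x
        + Apoly a₁ a₂ a₃ a₄ x * (x - g - δ)
            * (((x - g - v) * y (x + δ) - (x - g) * y x) / (x - f))
        - Bpoly b₁ b₂ b₃ b₄ (x - δ) * (x - g - v)
            * (((x - g - v - δ) * y x - (x - g - δ) * y (x - δ)) / (x - f - δ))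
      = (x - g - v) * (x - g - δ) * L1 δ v f g fbar w a₁ a₂ a₃ a₄ b₁ b₂ b₃ b₄ y x := by
  unfold L1 Vpoly
  field_simp
  ring

theorem dE7_L1_from_L2_L3_general
    (δ a₁ a₂ a₃ a₄ b₁ b₂ b₃ b₄ : ℂ)
    (v : ℂ)
    (f g fbar w : ℂ) (y ybar : ℂ → ℂ)
    (x : ℂ) (hx : x ∉ ({f, f + δ, g + v, g + δ} : Set ℂ))
    (hL2x : L2 δ v f g y ybar x = 0)
    (hL2xm : L2 δ v f g y ybar (x - δ) = 0)
    (hL3x : L3 δ v f g fbar w a₁ a₂ a₃ a₄ b₁ b₂ b₃ b₄ y ybar x = 0) :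
    L1 δ v f g fbar w a₁ a₂ a₃ a₄ b₁ b₂ b₃ b₄ y x = 0
    ∧ w * (x - fbar - δ) * y x
        + Apoly a₁ a₂ a₃ a₄ x * (x - g - δ)
            * (((x - g - v) * y (x + δ) - (x - g) * y x) / (x - f))
        - Bpoly b₁ b₂ b₃ b₄ (x - δ) * (x - g - v)
            * (((x - g - v - δ) * y x - (x - g - δ) * y (x - δ)) / (x - f - δ))
      = (x - g - v) * (x - g - δ) * L1 δ v f g fbar w a₁ a₂ a₃ a₄ b₁ b₂ b₃ b₄ y x := by
  simp only [Set.mem_insert_iff, Set.mem_singleton_iff, not_or] at hx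
  obtain ⟨hf, hfd, hgv, hgd⟩ := hx
  replace hf : x - f ≠ 0 := sub_ne_zero.mpr hf
  replace hfd : x - f - δ ≠ 0 := by rwa [sub_sub, sub_ne_zero]
  replace hgv : x - g - v ≠ 0 := by rwa [sub_sub, sub_ne_zero]
  replace hgd : x - g - δ ≠ 0 := by rwa [sub_sub, sub_ne_zero]
  have hsubst := L3_subst_eq_mul_L1 δ v f g fbar w a₁ a₂ a₃ a₄ b₁ b₂ b₃ b₄ y hf hfd hgv hgd
  refine ⟨?_, hsubst⟩
  have hL1 : (x - g - v) * (x - g - δ) * L1 δ v f g fbar w a₁ a₂ a₃ a₄ b₁ b₂ b₃ b₄ y x = 0 := by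
    rw [← hsubst, ← ybar_eq_of_L2_eq_zero hf hL2x, ← ybar_sub_eq_of_L2_sub_eq_zero hfd hL2xm]
    exact hL3x
  exact (mul_eq_zero.mp hL1).resolve_left (mul_ne_zero hgv hgd)

/-- eliminating `ȳ(x)`, `ȳ(x-δ)` from `L₂(x) = L₂(x-δ) = L₃(x) = 0`
yields `L₁(x) = 0`; moreover the substitution of `ȳ` from `L₂` into `L₃(x)` produces
exactly `(x-g-v)(x-g-δ)·L₁(x)`. -/
theorem dE7_L1_from_L2_L3
    (δ a₁ a₂ a₃ a₄ b₁ b₂ b₃ b₄ : ℂ)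
    (hcons : a₁ - a₂ - a₃ + a₄ + b₁ + b₂ - b₃ + b₄ + δ = 0)
    (v : ℂ) (hv : v = a₁ + a₄ - b₃)
    (f g fbar w : ℂ) (y ybar : ℂ → ℂ)
    (x : ℂ) (hx : x ∉ ({f, f + δ, g + v, g + δ} : Set ℂ))
    (hL2x : L2 δ v f g y ybar x = 0)
    (hL2xm : L2 δ v f g y ybar (x - δ) = 0)
    (hL3x : L3 δ v f g fbar w a₁ a₂ a₃ a₄ b₁ b₂ b₃ b₄ y ybar x = 0) :
    L1 δ v f g fbar w a₁ a₂ a₃ a₄ b₁ b₂ b₃ b₄ y x = 0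
    ∧ w * (x - fbar - δ) * y x
        + Apoly a₁ a₂ a₃ a₄ x * (x - g - δ)
            * (((x - g - v) * y (x + δ) - (x - g) * y x) / (x - f))
        - Bpoly b₁ b₂ b₃ b₄ (x - δ) * (x - g - v)
            * (((x - g - v - δ) * y x - (x - g - δ) * y (x - δ)) / (x - f - δ))
      = (x - g - v) * (x - g - δ) * L1 δ v f g fbar w a₁ a₂ a₃ a₄ b₁ b₂ b₃ b₄ y x :=
  dE7_L1_from_L2_L3_general δ a₁ a₂ a₃ a₄ b₁ b₂ b₃ b₄ v f g fbar w y ybar x hx hL2x hL2xm hL3x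

end
end

section
/- Assume w·(f-g)·(f̄-g) = v·(v-δ)·B(g), w·(f-g-v)·(f̄-g-v+δ) = v·(v-δ)·A(g+v), and v ≠ δ. Then for all x ∈ ℂ the linear identity w·(x-f̄-δ)·(f-g)·(f-g-v) = v·[ (f-g-v)·(x-g-v)·B(g) - (f-g)·(x-g-δ)·A(g+v) ] holds. Consequently, if moreover f ≠ g and f ≠ g+v, then for every x ∉ {f, f+δ, g+v, g+δ} and all values y(x+δ), y(x), y(x-δ), the expression A(x)/(x-f)·y(x+δ) + B(x-δ)/(x-f-δ)·y(x-δ) - (1/(x-g-v))·[A(x)(x-g)/(x-f) + V(x-δ)/((x-f-δ)(x-g-δ))]·y(x) equals A(x)/(x-f)·[y(x+δ) - (x-g)/(x-g-v)·y(x)] + B(x-δ)/(x-f-δ)·[y(x-δ) - (x-g-v-δ)/(x-g-δ)·y(x)] + v·[ B(g)/((f-g)(x-g-δ)) - A(g+v)/((f-g-v)(x-g-v)) ]·y(x), where V(x) := B(x)(x-g-v)(x-g-v+δ) - w(x-f)(x-f̄). -/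
/-!
Subtracting `(f-g)(x-g-δ)` times the second `w`-relation from `(f-g-v)(x-g-v)` times the first,
the `w`-side factors as `(v-δ)` times `w (x-f̄-δ)(f-g)(f-g-v)`, which gives the linear
identity. Divided by `(f-g)(f-g-v)(x-g-δ)(x-g-v)` it is the partial fraction decomposition of
`w (x-f̄-δ) / ((x-g-δ)(x-g-v))`, and this fraction is exactly what remains of the `V(x-δ)` term of
`L₁(x)` once its `B(x-δ)` part is split off; the `A(x)` terms agree on both sides.
-/

noncomputable section

theorem w_mul_eq_of_w_relations {K : Type*} [Field K] {δ v f g fbar w Bg Av : K}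
    (hw1 : w * (f - g) * (fbar - g) = v * (v - δ) * Bg)
    (hw2 : w * (f - g - v) * (fbar - g - v + δ) = v * (v - δ) * Av)
    (hvδ : v ≠ δ) (x : K) :
    w * (x - fbar - δ) * (f - g) * (f - g - v)
      = v * ((f - g - v) * (x - g - v) * Bg - (f - g) * (x - g - δ) * Av) := by
  refine mul_left_cancel₀ (sub_ne_zero.mpr hvδ) ?_
  linear_combination (f - g - v) * (x - g - v) * hw1 - (f - g) * (x - g - δ) * hw2

theorem w_div_eq_partial_fractions {K : Type*} [Field K] {δ v f g fbar w Bg Av x : K}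
    (hlin : w * (x - fbar - δ) * (f - g) * (f - g - v)
      = v * ((f - g - v) * (x - g - v) * Bg - (f - g) * (x - g - δ) * Av))
    (hfg : f - g ≠ 0) (hfgv : f - g - v ≠ 0) (hxgδ : x - g - δ ≠ 0) (hxgv : x - g - v ≠ 0) :
    w * (x - fbar - δ) / ((x - g - δ) * (x - g - v))
      = v * (Bg / ((f - g) * (x - g - δ)) - Av / ((f - g - v) * (x - g - v))) := by
  field_simp
  linear_combination hlin

theorem dE7_L1_rewritten_general
    (δ a₁ a₂ a₃ a₄ b₁ b₂ b₃ b₄ : ℂ)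
    (v : ℂ)
    (f g fbar w : ℂ)
    (hw1 : w * (f - g) * (fbar - g) = v * (v - δ) * Bpoly b₁ b₂ b₃ b₄ g)
    (hw2 : w * (f - g - v) * (fbar - g - v + δ) = v * (v - δ) * Apoly a₁ a₂ a₃ a₄ (g + v))
    (hvδ : v ≠ δ) :
    (∀ x : ℂ, w * (x - fbar - δ) * (f - g) * (f - g - v)
        = v * ((f - g - v) * (x - g - v) * Bpoly b₁ b₂ b₃ b₄ g
            - (f - g) * (x - g - δ) * Apoly a₁ a₂ a₃ a₄ (g + v)))
    ∧ (f ≠ g → f ≠ g + v →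
        ∀ x : ℂ, x ∉ ({f, f + δ, g + v, g + δ} : Set ℂ) →
        ∀ yp y0 ym : ℂ,
        Apoly a₁ a₂ a₃ a₄ x / (x - f) * yp
            + Bpoly b₁ b₂ b₃ b₄ (x - δ) / (x - f - δ) * ym
            - (1 / (x - g - v)) * (Apoly a₁ a₂ a₃ a₄ x * (x - g) / (x - f)
                + Vpoly δ v f g fbar w b₁ b₂ b₃ b₄ (x - δ) / ((x - f - δ) * (x - g - δ))) * y0
          = Apoly a₁ a₂ a₃ a₄ x / (x - f) * (yp - (x - g) / (x - g - v) * y0)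
            + Bpoly b₁ b₂ b₃ b₄ (x - δ) / (x - f - δ)
                * (ym - (x - g - v - δ) / (x - g - δ) * y0)
            + v * (Bpoly b₁ b₂ b₃ b₄ g / ((f - g) * (x - g - δ))
                - Apoly a₁ a₂ a₃ a₄ (g + v) / ((f - g - v) * (x - g - v))) * y0) := by
  have hlin := w_mul_eq_of_w_relations hw1 hw2 hvδ
  refine ⟨hlin, fun hfg hfgv x hx yp y0 ym => ?_⟩
  simp only [Set.mem_insert_iff, Set.mem_singleton_iff, not_or, ← ne_eq] at hx
  obtain ⟨hxf, hxfδ, hxgv, hxgδ⟩ := hx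
  rw [← sub_ne_zero] at hxf hxfδ hxgv hxgδ hfg hfgv
  rw [← sub_sub] at hxfδ hxgv hxgδ hfgv
  rw [← w_div_eq_partial_fractions (hlin x) hfg hfgv hxgδ hxgv, Vpoly]
  field_simp
  ring

/-- under the two `w`-relations (eq:w1), (eq:w2), a linear identity in `x`
holds, and consequently the Lax expression `L₁(x)` (eq:E7L1) can be rewritten in the
form (eq:E7LL1). -/
theorem dE7_L1_rewritten
    (δ a₁ a₂ a₃ a₄ b₁ b₂ b₃ b₄ : ℂ)
    (hcons : a₁ - a₂ - a₃ + a₄ + b₁ + b₂ - b₃ + b₄ + δ = 0)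
    (v : ℂ) (hv : v = a₁ + a₄ - b₃)
    (f g fbar w : ℂ)
    (hw1 : w * (f - g) * (fbar - g) = v * (v - δ) * Bpoly b₁ b₂ b₃ b₄ g)
    (hw2 : w * (f - g - v) * (fbar - g - v + δ) = v * (v - δ) * Apoly a₁ a₂ a₃ a₄ (g + v))
    (hvδ : v ≠ δ) :
    (∀ x : ℂ, w * (x - fbar - δ) * (f - g) * (f - g - v)
        = v * ((f - g - v) * (x - g - v) * Bpoly b₁ b₂ b₃ b₄ g
            - (f - g) * (x - g - δ) * Apoly a₁ a₂ a₃ a₄ (g + v)))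
    ∧ (f ≠ g → f ≠ g + v →
        ∀ x : ℂ, x ∉ ({f, f + δ, g + v, g + δ} : Set ℂ) →
        ∀ yp y0 ym : ℂ,
        Apoly a₁ a₂ a₃ a₄ x / (x - f) * yp
            + Bpoly b₁ b₂ b₃ b₄ (x - δ) / (x - f - δ) * ym
            - (1 / (x - g - v)) * (Apoly a₁ a₂ a₃ a₄ x * (x - g) / (x - f)
                + Vpoly δ v f g fbar w b₁ b₂ b₃ b₄ (x - δ) / ((x - f - δ) * (x - g - δ))) * y0
          = Apoly a₁ a₂ a₃ a₄ x / (x - f) * (yp - (x - g) / (x - g - v) * y0)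
            + Bpoly b₁ b₂ b₃ b₄ (x - δ) / (x - f - δ)
                * (ym - (x - g - v - δ) / (x - g - δ) * y0)
            + v * (Bpoly b₁ b₂ b₃ b₄ g / ((f - g) * (x - g - δ))
                - Apoly a₁ a₂ a₃ a₄ (g + v) / ((f - g - v) * (x - g - v))) * y0) :=
  dE7_L1_rewritten_general δ a₁ a₂ a₃ a₄ b₁ b₂ b₃ b₄ v f g fbar w hw1 hw2 hvδ

end
end

section
/- Assume w·(f-g)·(f̄-g) = v·(v-δ)·B(g) and w·(f-g-v)·(f̄-g-v+δ) = v·(v-δ)·A(g+v). Then the polynomial N(X) := A(X)·(X-g)·(X-f-δ)·(X-g-δ) + V(X-δ)·(X-f) in ℂ[X], where V(X) = B(X)(X-g-v)(X-g-v+δ) - w(X-f)(X-f̄), vanishes at X = g+δ and at X = g+v. If moreover v ≠ δ, then N is divisible in ℂ[X] by (X-g-v)(X-g-δ) and the quotient is a polynomial of degree at most 5; equivalently, the coefficient of y(x) in (x-f)(x-f-δ)·L₁(x) is a polynomial of degree at most 5 in x (the coefficients of y(x+δ) and y(x-δ) being the degree-5 polynomials (x-f-δ)A(x) and (x-f)B(x-δ)).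 -/
open Polynomial

/-!
At `X = g + δ` the first summand of `N` vanishes and `V(g)` is, up to the factor
`f - g - δ`, the difference of the two sides of the first `w`-relation. At `X = g + v` the
factor `Y - g - v + δ` of `V(X - δ)` vanishes, and `N(g + v)` is `f - g - v + δ` times the
difference of the sides of the second relation. As `deg N ≤ 7`, removing the two distinct
roots leaves a quotient of degree at most `5`.
-/

theorem exists_eq_X_sub_C_mul_X_sub_C_mul_of_isRoot {R : Type*} [CommRing R] [IsDomain R]
    {p : R[X]} {a b : R} {n : ℕ} (hab : a ≠ b) (ha : p.IsRoot a) (hb : p.IsRoot b)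
    (hp : p.natDegree ≤ n + 2) :
    ∃ q : R[X], p = (X - C a) * (X - C b) * q ∧ q.degree ≤ n := by
  obtain ⟨q₁, rfl⟩ := dvd_iff_isRoot.mpr ha
  have hq₁ : q₁.IsRoot b := by
    simpa [sub_ne_zero.mpr hab.symm] using hb
  obtain ⟨q, rfl⟩ := dvd_iff_isRoot.mpr hq₁
  refine ⟨q, (mul_assoc _ _ _).symm, ?_⟩
  rcases eq_or_ne q 0 with rfl | hq
  · simp
  rw [← mul_assoc, natDegree_mul (mul_ne_zero (X_sub_C_ne_zero a) (X_sub_C_ne_zero b)) hq,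
    natDegree_mul (X_sub_C_ne_zero a) (X_sub_C_ne_zero b), natDegree_X_sub_C,
    natDegree_X_sub_C] at hp
  exact degree_le_of_natDegree_le (by omega)

theorem dE7_L1_middle_coefficient_polynomial_general
    (δ a₁ a₂ a₃ a₄ b₁ b₂ b₃ b₄ : ℂ)
    (v : ℂ)
    (f g fbar w : ℂ)
    (hw1 : w * (f - g) * (fbar - g)
        = v * (v - δ) * ((g - b₁) * (g - b₂) * (g - b₃) * (g - b₄)))
    (hw2 : w * (f - g - v) * (fbar - g - v + δ)
        = v * (v - δ) * ((g + v - a₁) * (g + v - a₂) * (g + v - a₃) * (g + v - a₄)))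
    (V : Polynomial ℂ → Polynomial ℂ)
    (hV : ∀ Y : Polynomial ℂ,
        V Y = (Y - C b₁) * (Y - C b₂) * (Y - C b₃) * (Y - C b₄)
            * (Y - C g - C v) * (Y - C g - C v + C δ)
            - C w * (Y - C f) * (Y - C fbar))
    (N : Polynomial ℂ)
    (hN : N = (X - C a₁) * (X - C a₂) * (X - C a₃) * (X - C a₄)
            * (X - C g) * (X - C f - C δ) * (X - C g - C δ)
        + V (X - C δ) * (X - C f)) :
    N.eval (g + δ) = 0 ∧ N.eval (g + v) = 0
    ∧ (v ≠ δ → ∃ Q : Polynomial ℂ,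
        N = (X - C g - C v) * (X - C g - C δ) * Q ∧ Q.degree ≤ 5) := by
  rw [hV] at hN
  have hδ : N.eval (g + δ) = 0 := by
    simp only [hN, eval_add, eval_mul, eval_sub, eval_X, eval_C]
    linear_combination (f - g - δ) * hw1
  have hgv : N.eval (g + v) = 0 := by
    simp only [hN, eval_add, eval_mul, eval_sub, eval_X, eval_C]
    linear_combination (f + δ - g - v) * hw2
  refine ⟨hδ, hgv, fun hvδ => ?_⟩
  have hdeg : N.natDegree ≤ 5 + 2 := by
    rw [hN]; compute_degree
  obtain ⟨Q, hQ, hQdeg⟩ := exists_eq_X_sub_C_mul_X_sub_C_mul_of_isRoot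
    (by simpa using hvδ) hgv hδ hdeg
  exact ⟨Q, by simpa [sub_sub] using hQ, hQdeg⟩

/-- under the two `w`-relations, the numerator polynomial `N(X)` of the
`y(x)`-coefficient of `(x-f)(x-f-δ)L₁(x)` vanishes at `X = g+δ` and `X = g+v`, and (if
`v ≠ δ`) is divisible by `(X-g-v)(X-g-δ)` with quotient of degree at most `5`. -/
theorem dE7_L1_middle_coefficient_polynomial
    (δ a₁ a₂ a₃ a₄ b₁ b₂ b₃ b₄ : ℂ)
    (hcons : a₁ - a₂ - a₃ + a₄ + b₁ + b₂ - b₃ + b₄ + δ = 0)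
    (v : ℂ) (hv : v = a₁ + a₄ - b₃)
    (f g fbar w : ℂ)
    (hw1 : w * (f - g) * (fbar - g)
        = v * (v - δ) * ((g - b₁) * (g - b₂) * (g - b₃) * (g - b₄)))
    (hw2 : w * (f - g - v) * (fbar - g - v + δ)
        = v * (v - δ) * ((g + v - a₁) * (g + v - a₂) * (g + v - a₃) * (g + v - a₄)))
    (V : Polynomial ℂ → Polynomial ℂ)
    (hV : ∀ Y : Polynomial ℂ,
        V Y = (Y - C b₁) * (Y - C b₂) * (Y - C b₃) * (Y - C b₄)
            * (Y - C g - C v) * (Y - C g - C v + C δ)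
            - C w * (Y - C f) * (Y - C fbar))
    (N : Polynomial ℂ)
    (hN : N = (X - C a₁) * (X - C a₂) * (X - C a₃) * (X - C a₄)
            * (X - C g) * (X - C f - C δ) * (X - C g - C δ)
        + V (X - C δ) * (X - C f)) :
    N.eval (g + δ) = 0 ∧ N.eval (g + v) = 0
    ∧ (v ≠ δ → ∃ Q : Polynomial ℂ,
        N = (X - C g - C v) * (X - C g - C δ) * Q ∧ Q.degree ≤ 5) :=
  dE7_L1_middle_coefficient_polynomial_general δ a₁ a₂ a₃ a₄ b₁ b₂ b₃ b₄ v f g fbar w hw1 hw2 V hV N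
    hN
end

section
/- Define the polynomial-cleared Lax expression M(x) := (f-g)(f-g-v)·(x-f-δ)(x-g-δ)·A(x)·[(x-g-v)·y(x+δ) - (x-g)·y(x)] + (f-g)(f-g-v)·(x-f)(x-g-v)·B(x-δ)·[(x-g-δ)·y(x-δ) - (x-g-v-δ)·y(x)] + v·(x-f)(x-f-δ)·[(f-g-v)(x-g-v)·B(g) - (f-g)(x-g-δ)·A(g+v)]·y(x), which equals (f-g)(f-g-v)(x-g-v)(x-g-δ)(x-f)(x-f-δ)·L₁(x) for the d-E₇⁽¹⁾ Lax operator L₁. If (f-g-v)·y(f+δ) = (f-g)·y(f), then M(f) = 0 and M(f+δ) = 0; that is, x = f and x = f+δ are apparent singularities of the equation L₁ = 0, both governed by the single condition y(f+δ)/y(f) = (f-g)/(f-g-v). -/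
noncomputable section

theorem dE7_L1_apparent_singularities_general
    (δ a₁ a₂ a₃ a₄ b₁ b₂ b₃ b₄ : ℂ)
    (v : ℂ)
    (f g : ℂ) (y : ℂ → ℂ)
    (M : ℂ → ℂ)
    (hM : ∀ x, M x = (f - g) * (f - g - v) * (x - f - δ) * (x - g - δ)
            * Apoly a₁ a₂ a₃ a₄ x * ((x - g - v) * y (x + δ) - (x - g) * y x)
        + (f - g) * (f - g - v) * (x - f) * (x - g - v) * Bpoly b₁ b₂ b₃ b₄ (x - δ)
            * ((x - g - δ) * y (x - δ) - (x - g - v - δ) * y x)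
        + v * (x - f) * (x - f - δ)
            * ((f - g - v) * (x - g - v) * Bpoly b₁ b₂ b₃ b₄ g
                - (f - g) * (x - g - δ) * Apoly a₁ a₂ a₃ a₄ (g + v)) * y x)
    (hy : (f - g - v) * y (f + δ) = (f - g) * y f) :
    M f = 0 ∧ M (f + δ) = 0 := by
  constructor
  -- At `x = f` only the first term lacks the factor `x - f`; its difference is `hy`.
  · rw [hM]
    linear_combination
      (f - g) * (f - g - v) * (f - f - δ) * (f - g - δ) * Apoly a₁ a₂ a₃ a₄ f * hy
  -- At `x = f + δ` only the second term lacks the factor `x - f - δ`; its difference is `-hy`.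
  · rw [hM, add_sub_cancel_right]
    linear_combination
      -((f - g) * (f - g - v) * δ * (f + δ - g - v) * Bpoly b₁ b₂ b₃ b₄ f) * hy

/-- property (iii) of Lemma 2.3: `x = f` and `x = f+δ` are apparent
singularities of `L₁ = 0`, both governed by `y(f+δ)/y(f) = (f-g)/(f-g-v)`. -/
theorem dE7_L1_apparent_singularities
    (δ a₁ a₂ a₃ a₄ b₁ b₂ b₃ b₄ : ℂ)
    (hcons : a₁ - a₂ - a₃ + a₄ + b₁ + b₂ - b₃ + b₄ + δ = 0)
    (v : ℂ) (hv : v = a₁ + a₄ - b₃)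
    (f g : ℂ) (y : ℂ → ℂ)
    (M : ℂ → ℂ)
    (hM : ∀ x, M x = (f - g) * (f - g - v) * (x - f - δ) * (x - g - δ)
            * Apoly a₁ a₂ a₃ a₄ x * ((x - g - v) * y (x + δ) - (x - g) * y x)
        + (f - g) * (f - g - v) * (x - f) * (x - g - v) * Bpoly b₁ b₂ b₃ b₄ (x - δ)
            * ((x - g - δ) * y (x - δ) - (x - g - v - δ) * y x)
        + v * (x - f) * (x - f - δ)
            * ((f - g - v) * (x - g - v) * Bpoly b₁ b₂ b₃ b₄ g
                - (f - g) * (x - g - δ) * Apoly a₁ a₂ a₃ a₄ (g + v)) * y x)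
    (hy : (f - g - v) * y (f + δ) = (f - g) * y f) :
    M f = 0 ∧ M (f + δ) = 0 :=
  dE7_L1_apparent_singularities_general δ a₁ a₂ a₃ a₄ b₁ b₂ b₃ b₄ v f g y M hM hy

end
end

section
/- Assume w ≠ 0 and fix x ∈ ℂ with x ∉ {f̄, f̄+δ, g, g+v}. If L₂(x) = 0, L₃(x) = 0 and L₃(x+δ) = 0, then L₁*(x) = 0, where L₁*(x) := A(x+δ)/(x-f̄)·ȳ(x+δ) + B(x-δ)/(x-f̄-δ)·ȳ(x-δ) - (1/(x-g-v))·[ A(x)·(x-g-δ)/(x-f̄-δ) + V(x)/((x-f̄)(x-g)) ]·ȳ(x) and V(x) := B(x)(x-g-v)(x-g-v+δ) - w(x-f)(x-f̄). (Here A(x+δ) = Ā(x) and B = B̄ are the polynomials for the T-shifted parameters āᵢ = aᵢ - δ, b̄ᵢ = bᵢ.) -/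
noncomputable section

/-- The shifted d-E₇⁽¹⁾ Lax operator
`L₁*(x) = A(x+δ)/(x-f̄)·ȳ(x+δ) + B(x-δ)/(x-f̄-δ)·ȳ(x-δ)
  - (1/(x-g-v))·[A(x)(x-g-δ)/(x-f̄-δ) + V(x)/((x-f̄)(x-g))]·ȳ(x)`. -/
def L1star (δ v f g fbar w a₁ a₂ a₃ a₄ b₁ b₂ b₃ b₄ : ℂ) (ybar : ℂ → ℂ) (x : ℂ) : ℂ :=
  Apoly a₁ a₂ a₃ a₄ (x + δ) / (x - fbar) * ybar (x + δ)
    + Bpoly b₁ b₂ b₃ b₄ (x - δ) / (x - fbar - δ) * ybar (x - δ)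
    - (1 / (x - g - v)) * (Apoly a₁ a₂ a₃ a₄ x * (x - g - δ) / (x - fbar - δ)
        + Vpoly δ v f g fbar w b₁ b₂ b₃ b₄ x / ((x - fbar) * (x - g))) * ybar x

/- The right-hand side is free of `y`: its terms in `y(x)` and `y(x+δ)` cancel. -/
theorem L1star_mul_denominators_eq (δ v f g fbar w a₁ a₂ a₃ a₄ b₁ b₂ b₃ b₄ : ℂ)
    (y ybar : ℂ → ℂ) {x : ℂ} (hf : x ≠ fbar) (hfδ : x ≠ fbar + δ) (hg : x ≠ g)
    (hgv : x ≠ g + v) :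
    (x - fbar) * (x - fbar - δ) * (x - g) * (x - g - v) *
        L1star δ v f g fbar w a₁ a₂ a₃ a₄ b₁ b₂ b₃ b₄ ybar x =
      w * (x - fbar) * (x - fbar - δ) * L2 δ v f g y ybar x
        + (x - fbar - δ) * (x - g - v) * L3 δ v f g fbar w a₁ a₂ a₃ a₄ b₁ b₂ b₃ b₄ y ybar (x + δ)
        - (x - g) * (x - fbar) * L3 δ v f g fbar w a₁ a₂ a₃ a₄ b₁ b₂ b₃ b₄ y ybar x := by
  have hf' : x - fbar ≠ 0 := sub_ne_zero.mpr hf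
  have hfδ' : x - fbar - δ ≠ 0 := by rwa [sub_sub, sub_ne_zero]
  have hg' : x - g ≠ 0 := sub_ne_zero.mpr hg
  have hgv' : x - g - v ≠ 0 := by rwa [sub_sub, sub_ne_zero]
  simp only [L1star, L2, L3, Vpoly, add_sub_cancel_right]
  field_simp
  ring

theorem dE7_L1star_from_L2_L3_general
    (δ a₁ a₂ a₃ a₄ b₁ b₂ b₃ b₄ : ℂ)
    (v : ℂ)
    (f g fbar w : ℂ) (y ybar : ℂ → ℂ)
    (x : ℂ) (hx : x ∉ ({fbar, fbar + δ, g, g + v} : Set ℂ))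
    (hL2x : L2 δ v f g y ybar x = 0)
    (hL3x : L3 δ v f g fbar w a₁ a₂ a₃ a₄ b₁ b₂ b₃ b₄ y ybar x = 0)
    (hL3xd : L3 δ v f g fbar w a₁ a₂ a₃ a₄ b₁ b₂ b₃ b₄ y ybar (x + δ) = 0) :
    L1star δ v f g fbar w a₁ a₂ a₃ a₄ b₁ b₂ b₃ b₄ ybar x = 0 := by
  simp only [Set.mem_insert_iff, Set.mem_singleton_iff, not_or] at hx
  obtain ⟨hf, hfδ, hg, hgv⟩ := hx
  have hD : (x - fbar) * (x - fbar - δ) * (x - g) * (x - g - v) ≠ 0 := by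
    simp only [ne_eq, mul_eq_zero, sub_sub, sub_eq_zero, not_or]
    exact ⟨⟨⟨hf, hfδ⟩, hg⟩, hgv⟩
  refine (mul_eq_zero.mp ?_).resolve_left hD
  rw [L1star_mul_denominators_eq δ v f g fbar w a₁ a₂ a₃ a₄ b₁ b₂ b₃ b₄ y ybar hf hfδ hg hgv,
    hL2x, hL3x, hL3xd]
  ring

/-- eliminating `y(x)`, `y(x+δ)` from `L₂(x) = L₃(x) = L₃(x+δ) = 0`
yields `L₁*(x) = 0`. -/
theorem dE7_L1star_from_L2_L3
    (δ a₁ a₂ a₃ a₄ b₁ b₂ b₃ b₄ : ℂ)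
    (hcons : a₁ - a₂ - a₃ + a₄ + b₁ + b₂ - b₃ + b₄ + δ = 0)
    (v : ℂ) (hv : v = a₁ + a₄ - b₃)
    (f g fbar w : ℂ) (y ybar : ℂ → ℂ)
    (hw : w ≠ 0)
    (x : ℂ) (hx : x ∉ ({fbar, fbar + δ, g, g + v} : Set ℂ))
    (hL2x : L2 δ v f g y ybar x = 0)
    (hL3x : L3 δ v f g fbar w a₁ a₂ a₃ a₄ b₁ b₂ b₃ b₄ y ybar x = 0)
    (hL3xd : L3 δ v f g fbar w a₁ a₂ a₃ a₄ b₁ b₂ b₃ b₄ y ybar (x + δ) = 0) :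
    L1star δ v f g fbar w a₁ a₂ a₃ a₄ b₁ b₂ b₃ b₄ ybar x = 0 :=
  dE7_L1star_from_L2_L3_general δ a₁ a₂ a₃ a₄ b₁ b₂ b₃ b₄ v f g fbar w y ybar x hx hL2x hL3x hL3xd

end
end

section
/- Define M*(x) := (x-f̄-δ)(x-g-v)(x-g)·A(x+δ)·ȳ(x+δ) + (x-f̄)(x-g-v)(x-g)·B(x-δ)·ȳ(x-δ) - [ (x-f̄)(x-g)(x-g-δ)·A(x) + (x-f̄-δ)·V(x) ]·ȳ(x), where V(x) = B(x)(x-g-v)(x-g-v+δ) - w(x-f)(x-f̄); this equals (x-f̄)(x-f̄-δ)(x-g-v)(x-g)·L₁*(x) for the shifted d-E₇⁽¹⁾ Lax operator L₁*. If A(f̄+δ)·(f̄-g)·ȳ(f̄+δ) = B(f̄)·(f̄-g-v+δ)·ȳ(f̄), then M*(f̄) = 0 and M*(f̄+δ) = 0; that is, x = f̄ and x = f̄+δ are apparent singularities of L₁* = 0, both governed by the single condition ȳ(f̄+δ)/ȳ(f̄) = B(f̄)(f̄-g-v+δ)/(A(f̄+δ)(f̄-g)). -/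
/-!
At `x = f̄` the terms of `M*` carrying the factor `x - f̄` vanish, and `V(f̄) = B(f̄)(f̄-g-v)(f̄-g-v+δ)`;
at `x = f̄+δ` the terms carrying `x - f̄ - δ` vanish. In both cases what is left is a multiple of
`A(f̄+δ)(f̄-g)ȳ(f̄+δ) - B(f̄)(f̄-g-v+δ)ȳ(f̄)`, which the hypothesis makes zero.
-/

noncomputable section

section ClearedLaxOperator

variable {R : Type*} [CommRing R]

/-- The paper's `M*(x) = (x-f̄)(x-f̄-δ)(x-g-v)(x-g)·L₁*(x)`. -/
def clearedL1Star (A B V y : R → R) (δ fbar g v x : R) : R :=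
  (x - fbar - δ) * (x - g - v) * (x - g) * A (x + δ) * y (x + δ)
    + (x - fbar) * (x - g - v) * (x - g) * B (x - δ) * y (x - δ)
    - ((x - fbar) * (x - g) * (x - g - δ) * A x + (x - fbar - δ) * V x) * y x

variable (A B V y : R → R) (δ fbar g v : R)

theorem clearedL1Star_self :
    clearedL1Star A B V y δ fbar g v fbar
      = δ * (V fbar * y fbar - (fbar - g - v) * (fbar - g) * A (fbar + δ) * y (fbar + δ)) := by
  unfold clearedL1Star
  ring

theorem clearedL1Star_add_self :
    clearedL1Star A B V y δ fbar g v (fbar + δ)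
      = δ * (fbar + δ - g)
        * ((fbar - g - v + δ) * B fbar * y fbar - (fbar - g) * A (fbar + δ) * y (fbar + δ)) := by
  unfold clearedL1Star
  rw [add_sub_cancel_right]
  ring

end ClearedLaxOperator

theorem Vpoly_fbar (δ v f g fbar w b₁ b₂ b₃ b₄ : ℂ) :
    Vpoly δ v f g fbar w b₁ b₂ b₃ b₄ fbar
      = Bpoly b₁ b₂ b₃ b₄ fbar * (fbar - g - v) * (fbar - g - v + δ) := by
  rw [Vpoly, sub_self, mul_zero, sub_zero]

theorem dE7_L1star_apparent_singularities_general
    (δ a₁ a₂ a₃ a₄ b₁ b₂ b₃ b₄ : ℂ)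
    (v : ℂ)
    (f g fbar w : ℂ) (ybar : ℂ → ℂ)
    (Mstar : ℂ → ℂ)
    (hM : ∀ x, Mstar x = (x - fbar - δ) * (x - g - v) * (x - g)
            * Apoly a₁ a₂ a₃ a₄ (x + δ) * ybar (x + δ)
        + (x - fbar) * (x - g - v) * (x - g) * Bpoly b₁ b₂ b₃ b₄ (x - δ) * ybar (x - δ)
        - ((x - fbar) * (x - g) * (x - g - δ) * Apoly a₁ a₂ a₃ a₄ x
            + (x - fbar - δ) * Vpoly δ v f g fbar w b₁ b₂ b₃ b₄ x) * ybar x)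
    (hy : Apoly a₁ a₂ a₃ a₄ (fbar + δ) * (fbar - g) * ybar (fbar + δ)
        = Bpoly b₁ b₂ b₃ b₄ fbar * (fbar - g - v + δ) * ybar fbar) :
    Mstar fbar = 0 ∧ Mstar (fbar + δ) = 0 := by
  have hMstar : Mstar = clearedL1Star (Apoly a₁ a₂ a₃ a₄) (Bpoly b₁ b₂ b₃ b₄)
      (Vpoly δ v f g fbar w b₁ b₂ b₃ b₄) ybar δ fbar g v := funext hM
  rw [hMstar, clearedL1Star_self, clearedL1Star_add_self, Vpoly_fbar]
  constructor
  · linear_combination (-δ) * (fbar - g - v) * hy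
  · linear_combination (-δ) * (fbar + δ - g) * hy

/-- property (iii) of Lemma 2.4: `x = f̄` and `x = f̄+δ` are apparent
singularities of `L₁* = 0`, both governed by
`ȳ(f̄+δ)/ȳ(f̄) = B(f̄)(f̄-g-v+δ)/(A(f̄+δ)(f̄-g))`. -/
theorem dE7_L1star_apparent_singularities
    (δ a₁ a₂ a₃ a₄ b₁ b₂ b₃ b₄ : ℂ)
    (hcons : a₁ - a₂ - a₃ + a₄ + b₁ + b₂ - b₃ + b₄ + δ = 0)
    (v : ℂ) (hv : v = a₁ + a₄ - b₃)
    (f g fbar w : ℂ) (ybar : ℂ → ℂ)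
    (Mstar : ℂ → ℂ)
    (hM : ∀ x, Mstar x = (x - fbar - δ) * (x - g - v) * (x - g)
            * Apoly a₁ a₂ a₃ a₄ (x + δ) * ybar (x + δ)
        + (x - fbar) * (x - g - v) * (x - g) * Bpoly b₁ b₂ b₃ b₄ (x - δ) * ybar (x - δ)
        - ((x - fbar) * (x - g) * (x - g - δ) * Apoly a₁ a₂ a₃ a₄ x
            + (x - fbar - δ) * Vpoly δ v f g fbar w b₁ b₂ b₃ b₄ x) * ybar x)
    (hy : Apoly a₁ a₂ a₃ a₄ (fbar + δ) * (fbar - g) * ybar (fbar + δ)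
        = Bpoly b₁ b₂ b₃ b₄ fbar * (fbar - g - v + δ) * ybar fbar) :
    Mstar fbar = 0 ∧ Mstar (fbar + δ) = 0 :=
  dE7_L1star_apparent_singularities_general δ a₁ a₂ a₃ a₄ b₁ b₂ b₃ b₄ v f g fbar w ybar Mstar hM hy

end
end

section
/- Assume w ≠ 0 and let f̄ ∈ ℂ. Suppose y : ℂ → ℂ satisfies L₁(x) = 0 for all x ∉ {f, f+δ, g+v, g+δ}, where L₁(x) := A(x)/(x-f)·y(x+δ) + B(x-δ)/(x-f-δ)·y(x-δ) - (1/(x-g-v))·[A(x)(x-g)/(x-f) + V(x-δ)/((x-f-δ)(x-g-δ))]·y(x) and V(x) := B(x)(x-g-v)(x-g-v+δ) - w(x-f)(x-f̄). Define ȳ(x) := [(x-g-v)·y(x+δ) - (x-g)·y(x)]/(x-f) for x ≠ f. Then ȳ satisfies the T-shifted Lax equation L₁*(x) = 0 for every x ∉ {f-δ, f, f+δ, g, g+δ, g+v-δ, g+v, f̄, f̄+δ}, where L₁*(x) := A(x+δ)/(x-f̄)·ȳ(x+δ) + B(x-δ)/(x-f̄-δ)·ȳ(x-δ) - (1/(x-g-v))·[A(x)(x-g-δ)/(x-f̄-δ)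 + V(x)/((x-f̄)(x-g))]·ȳ(x). -/
noncomputable section

/-! With `F = x-f`, `Φ = x-f̄`, `G = x-g`, `W = x-g-v` and `ȳ(x) = (W y(x+δ) - G y(x))/F`, one has
the operator identity `L₁*ȳ(x) = (W+δ)/Φ · L₁y(x+δ) - (G-δ)/(Φ-δ) · L₁y(x)`. Both sides are
combinations of `y(x+2δ), y(x+δ), y(x), y(x-δ)`; the outer coefficients agree on sight and the
inner two are rational identities. In the coefficient of `y(x)` the `w`-terms of `V(x)` and `V(x-δ)` both reduce to `-w/W` and cancel. -/

section GaugeCoefficients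

variable {F Φ G W δ : ℂ}

theorem gauge_coeff_shift_eq (A₀ A₁ V : ℂ) (hW : W ≠ 0) (hW' : W + δ ≠ 0) :
    A₁ / Φ * (-(G + δ) / (F + δ)) - 1 / W * (A₀ * (G - δ) / (Φ - δ) + V / (Φ * G)) * (W / F)
      = (W + δ) / Φ * (-(1 / (W + δ)) * (A₁ * (G + δ) / (F + δ) + V / (F * G)))
        - (G - δ) / (Φ - δ) * (A₀ / F) := by
  have cancel_W (X : ℂ) : 1 / W * X * (W / F) = X / F := by field_simp
  have cancel_W_add (X : ℂ) : (W + δ) / Φ * (-(1 / (W + δ)) * X) = -X / Φ := by field_simp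
  rw [cancel_W, cancel_W_add]
  ring

theorem gauge_coeff_center_eq (w A₀ B₀ Bₘ : ℂ) (hF : F ≠ 0) (hF' : F - δ ≠ 0) (hΦ : Φ ≠ 0)
    (hΦ' : Φ - δ ≠ 0) (hG : G ≠ 0) (hG' : G - δ ≠ 0) (hW : W ≠ 0) :
    Bₘ / (Φ - δ) * ((W - δ) / (F - δ))
      + 1 / W * (A₀ * (G - δ) / (Φ - δ) + (B₀ * W * (W + δ) - w * F * Φ) / (Φ * G)) * (G / F)
    = (W + δ) / Φ * (B₀ / F)
      + (G - δ) / (Φ - δ) * (1 / W * (A₀ * G / F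
          + (Bₘ * (W - δ) * W - w * (F - δ) * (Φ - δ)) / ((F - δ) * (G - δ)))) := by
  field_simp
  ring

end GaugeCoefficients

theorem L1star_eq_of_ybar {δ v f g fbar w a₁ a₂ a₃ a₄ b₁ b₂ b₃ b₄ : ℂ} {y ybar : ℂ → ℂ}
    (hybar : ∀ x : ℂ, x ≠ f →
        ybar x = ((x - g - v) * y (x + δ) - (x - g) * y x) / (x - f)) {x : ℂ}
    (hx : x ∉ ({f - δ, f, f + δ, g, g + δ, g + v - δ, g + v, fbar, fbar + δ} : Set ℂ)) :
    L1star δ v f g fbar w a₁ a₂ a₃ a₄ b₁ b₂ b₃ b₄ ybar x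
      = (x - g - v + δ) / (x - fbar) * L1 δ v f g fbar w a₁ a₂ a₃ a₄ b₁ b₂ b₃ b₄ y (x + δ)
        - (x - g - δ) / (x - fbar - δ) * L1 δ v f g fbar w a₁ a₂ a₃ a₄ b₁ b₂ b₃ b₄ y x := by
  simp only [Set.mem_insert_iff, Set.mem_singleton_iff, not_or] at hx
  obtain ⟨hfm, hf, hfp, hg, hgp, hvm, hv, hfbar, hfbarp⟩ := hx
  have hF : x - f ≠ 0 := sub_ne_zero.mpr hf
  have hF' : x - f - δ ≠ 0 := fun h => hfp (by linear_combination h)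
  have hΦ : x - fbar ≠ 0 := sub_ne_zero.mpr hfbar
  have hΦ' : x - fbar - δ ≠ 0 := fun h => hfbarp (by linear_combination h)
  have hG : x - g ≠ 0 := sub_ne_zero.mpr hg
  have hG' : x - g - δ ≠ 0 := fun h => hgp (by linear_combination h)
  have hW : x - g - v ≠ 0 := fun h => hv (by linear_combination h)
  have hW' : x - g - v + δ ≠ 0 := fun h => hvm (by linear_combination h)
  rw [L1star, L1, L1, hybar (x + δ) (fun h => hfm (by linear_combination h)), hybar x hf,
    hybar (x - δ) (fun h => hfp (by linear_combination h))]
  simp only [Vpoly, add_sub_cancel_right, sub_add_cancel]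
  linear_combination
    y (x + δ) * gauge_coeff_shift_eq (F := x - f) (Φ := x - fbar) (G := x - g)
      (Apoly a₁ a₂ a₃ a₄ x) (Apoly a₁ a₂ a₃ a₄ (x + δ))
      (Bpoly b₁ b₂ b₃ b₄ x * (x - g - v) * (x - g - v + δ) - w * (x - f) * (x - fbar)) hW hW'
    + y x * gauge_coeff_center_eq w (Apoly a₁ a₂ a₃ a₄ x) (Bpoly b₁ b₂ b₃ b₄ x)
      (Bpoly b₁ b₂ b₃ b₄ (x - δ)) hF hF' hΦ hΦ' hG hG' hW

theorem self_and_add_notMem_of_notMem {δ v f g fbar x : ℂ}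
    (hx : x ∉ ({f - δ, f, f + δ, g, g + δ, g + v - δ, g + v, fbar, fbar + δ} : Set ℂ)) :
    x ∉ ({f, f + δ, g + v, g + δ} : Set ℂ) ∧ x + δ ∉ ({f, f + δ, g + v, g + δ} : Set ℂ) := by
  simp only [Set.mem_insert_iff, Set.mem_singleton_iff] at hx ⊢
  grind

theorem dE7_ybar_solves_L1star_general
    (δ a₁ a₂ a₃ a₄ b₁ b₂ b₃ b₄ : ℂ)
    (v : ℂ)
    (f g w : ℂ) (fbar : ℂ)
    (y : ℂ → ℂ)
    (hL1 : ∀ x : ℂ, x ∉ ({f, f + δ, g + v, g + δ} : Set ℂ) →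
        L1 δ v f g fbar w a₁ a₂ a₃ a₄ b₁ b₂ b₃ b₄ y x = 0)
    (ybar : ℂ → ℂ)
    (hybar : ∀ x : ℂ, x ≠ f →
        ybar x = ((x - g - v) * y (x + δ) - (x - g) * y x) / (x - f)) :
    ∀ x : ℂ, x ∉ ({f - δ, f, f + δ, g, g + δ, g + v - δ, g + v, fbar, fbar + δ} : Set ℂ) →
      L1star δ v f g fbar w a₁ a₂ a₃ a₄ b₁ b₂ b₃ b₄ ybar x = 0 := by
  intro x hx
  obtain ⟨hx₀, hx₁⟩ := self_and_add_notMem_of_notMem hx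
  rw [L1star_eq_of_ybar hybar hx, hL1 _ hx₁, hL1 _ hx₀]
  ring

/-- if `y` solves `L₁ = 0` away from the singular points, then
`ȳ(x) := [(x-g-v)y(x+δ) - (x-g)y(x)]/(x-f)` solves the T-shifted Lax equation
`L₁* = 0` away from finitely many points. -/
theorem dE7_ybar_solves_L1star
    (δ a₁ a₂ a₃ a₄ b₁ b₂ b₃ b₄ : ℂ)
    (hcons : a₁ - a₂ - a₃ + a₄ + b₁ + b₂ - b₃ + b₄ + δ = 0)
    (v : ℂ) (hv : v = a₁ + a₄ - b₃)
    (f g w : ℂ) (hw : w ≠ 0) (fbar : ℂ)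
    (y : ℂ → ℂ)
    (hL1 : ∀ x : ℂ, x ∉ ({f, f + δ, g + v, g + δ} : Set ℂ) →
        L1 δ v f g fbar w a₁ a₂ a₃ a₄ b₁ b₂ b₃ b₄ y x = 0)
    (ybar : ℂ → ℂ)
    (hybar : ∀ x : ℂ, x ≠ f →
        ybar x = ((x - g - v) * y (x + δ) - (x - g) * y x) / (x - f)) :
    ∀ x : ℂ, x ∉ ({f - δ, f, f + δ, g, g + δ, g + v - δ, g + v, fbar, fbar + δ} : Set ℂ) →
      L1star δ v f g fbar w a₁ a₂ a₃ a₄ b₁ b₂ b₃ b₄ ybar x = 0 :=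
  dE7_ybar_solves_L1star_general δ a₁ a₂ a₃ a₄ b₁ b₂ b₃ b₄ v f g w fbar y hL1 ybar hybar

end
end

section
/- Define the polynomial-cleared d-E₆⁽¹⁾ Lax expression M(x) := (f-g)·(x-f-δ)(x-g-δ)·(x-a₁)(x-a₂)·[y(x+δ) - (x-g)·y(x)] + (f-g)·(x-f)·B(x)·[(x-g-δ)·y(x-δ) - y(x)] + (x-f)(x-f-δ)·[(f-g)(x-g-δ)·(g+u₁)(g+u₂) - B(x)]·y(x), which equals (f-g)(x-f)(x-f-δ)(x-g-δ)·L₁(x) for the d-E₆⁽¹⁾ Lax operator L₁. If y(f+δ) = (f-g)·y(f), then M(f) = 0 and M(f+δ) = 0; that is, x = f and x = f+δ are apparent singularities of L₁ = 0, both governed by the single condition y(f+δ) = (f-g)y(f). -/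
theorem dE6_L1_apparent_singularities_general
    (δ a₁ a₂ : ℂ)
    (B : ℂ → ℂ)
    (u₁ u₂ : ℂ)
    (f g : ℂ) (y : ℂ → ℂ)
    (M : ℂ → ℂ)
    (hM : ∀ x, M x = (f - g) * (x - f - δ) * (x - g - δ) * ((x - a₁) * (x - a₂))
            * (y (x + δ) - (x - g) * y x)
        + (f - g) * (x - f) * B x * ((x - g - δ) * y (x - δ) - y x)
        + (x - f) * (x - f - δ)
            * ((f - g) * (x - g - δ) * ((g + u₁) * (g + u₂)) - B x) * y x)
    (hy : y (f + δ) = (f - g) * y f) :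
    M f = 0 ∧ M (f + δ) = 0 := by
  constructor
  · rw [hM, hy]; ring
  · rw [hM, add_sub_cancel_right, hy]; ring

/-- for the d-E₆⁽¹⁾ Lax equation, `x = f` and `x = f+δ` are apparent
singularities, both governed by the single condition `y(f+δ) = (f-g)y(f)`. -/
theorem dE6_L1_apparent_singularities
    (δ a₁ a₂ b₁ b₂ b₃ b₄ : ℂ)
    (B : ℂ → ℂ)
    (hB : ∀ x, B x = (x - b₁) * (x - b₂) * (x - b₃) * (x - b₄))
    (u₁ u₂ : ℂ) (hu₁ : u₁ = a₂ - b₁ - b₂ - b₄ - δ) (hu₂ : u₂ = a₁ - b₃)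
    (f g : ℂ) (y : ℂ → ℂ)
    (M : ℂ → ℂ)
    (hM : ∀ x, M x = (f - g) * (x - f - δ) * (x - g - δ) * ((x - a₁) * (x - a₂))
            * (y (x + δ) - (x - g) * y x)
        + (f - g) * (x - f) * B x * ((x - g - δ) * y (x - δ) - y x)
        + (x - f) * (x - f - δ)
            * ((f - g) * (x - g - δ) * ((g + u₁) * (g + u₂)) - B x) * y x)
    (hy : y (f + δ) = (f - g) * y f) :
    M f = 0 ∧ M (f + δ) = 0 :=
  dE6_L1_apparent_singularities_general δ a₁ a₂ B u₁ u₂ f g y M hM hy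
end

section
/- Define the polynomial-cleared d-D₄⁽¹⁾ Lax expression M(x) := t·(x-f-δ)·(x-a₁)(x-a₂)·[g·y(x+δ) - y(x)] + g·(x-f)·(x-b₁-δ)(x-b₂-δ)·[y(x-δ) - g·y(x)] + (x-f)(x-f-δ)·[a₁·g·(g-t) + (g-1)(g-t)·(x+f-a₁-a₂) + u·g·(g-1)]·y(x), which equals g·(x-f)(x-f-δ)·L₁(x) for the d-D₄⁽¹⁾ Lax operator L₁. If g·y(f+δ) = y(f), then M(f) = 0 and M(f+δ) = 0; that is, x = f and x = f+δ are apparent singularities of L₁ = 0, both governed by the single condition g·y(f+δ) = y(f). -/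
theorem dD4_L1_apparent_singularities_general
    (δ a₁ a₂ b₁ b₂ t : ℂ)
    (u : ℂ)
    (f g : ℂ) (y : ℂ → ℂ)
    (M : ℂ → ℂ)
    (hM : ∀ x, M x = t * (x - f - δ) * ((x - a₁) * (x - a₂)) * (g * y (x + δ) - y x)
        + g * (x - f) * ((x - b₁ - δ) * (x - b₂ - δ)) * (y (x - δ) - g * y x)
        + (x - f) * (x - f - δ)
            * (a₁ * g * (g - t) + (g - 1) * (g - t) * (x + f - a₁ - a₂)
                + u * g * (g - 1)) * y x)
    (hy : g * y (f + δ) = y f) :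
    M f = 0 ∧ M (f + δ) = 0 := by
  -- At each point only one summand survives, and it carries the factor `g * y (f + δ) - y f`.
  constructor
  · rw [hM, hy]
    ring
  · rw [hM, add_sub_cancel_right, ← hy]
    ring

/-- for the d-D₄⁽¹⁾ Lax equation, `x = f` and `x = f+δ` are apparent
singularities, both governed by the single condition `g·y(f+δ) = y(f)`. -/
theorem dD4_L1_apparent_singularities
    (δ a₁ a₂ b₁ b₂ t : ℂ)
    (u : ℂ) (hu : u = a₂ - b₁ - b₂ - δ)
    (f g : ℂ) (hg : g ≠ 0) (y : ℂ → ℂ)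
    (M : ℂ → ℂ)
    (hM : ∀ x, M x = t * (x - f - δ) * ((x - a₁) * (x - a₂)) * (g * y (x + δ) - y x)
        + g * (x - f) * ((x - b₁ - δ) * (x - b₂ - δ)) * (y (x - δ) - g * y x)
        + (x - f) * (x - f - δ)
            * (a₁ * g * (g - t) + (g - 1) * (g - t) * (x + f - a₁ - a₂)
                + u * g * (g - 1)) * y x)
    (hy : g * y (f + δ) = y f) :
    M f = 0 ∧ M (f + δ) = 0 :=
  dD4_L1_apparent_singularities_general δ a₁ a₂ b₁ b₂ t u f g y M hM hy
end

section
/- For ε ≠ 0 put a₄(ε) = -1/ε, a₃(ε) = -1/ε + a₁ - a₂ + b₁ + b₂ - b₃ + b₄ + δ, v(ε) = a₁ + a₄(ε) - b₃, and A_ε(x) = (x-a₁)(x-a₂)(x-a₃(ε))(x-a₄(ε)) (these substituted parameters satisfy the d-E₇⁽¹⁾ constraint for every ε ≠ 0). Then lim_{ε→0} ε²·[ (f-g-v(ε))·(f-ǧ-v(ε)-δ)·B(f) - (f-g)(f-ǧ)·A_ε(f) ] = B(f) - (f-g)(f-ǧ)(f-a₁)(f-a₂). In particular, if along some sequence εₙ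 → 0 with εₙ ≠ 0 the first d-E₇⁽¹⁾ equation (f-g-v(εₙ))(f-ǧ-v(εₙ)-δ)·B(f) = (f-g)(f-ǧ)·A_{εₙ}(f) holds, then the first d-E₆⁽¹⁾ equation (f-g)(f-ǧ)·(f-a₁)(f-a₂) = B(f) holds. -/
open Filter Topology

/-!
Every factor of the d-E₇⁽¹⁾ equation that contains `a₃(ε)` or `a₄(ε)` has the shape `u + ε⁻¹`,
and `ε² (u + ε⁻¹) (w + ε⁻¹) = (ε u + 1) (ε w + 1) → 1`. Multiplying the equation by `ε²` therefore
kills every term except `B(f) - (f - g)(f - ǧ)(f - a₁)(f - a₂)`.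
-/

theorem sq_mul_add_inv_mul_add_inv {𝕜 : Type*} [Field 𝕜] {ε : 𝕜} (hε : ε ≠ 0) (u w : 𝕜) :
    ε ^ 2 * ((u + ε⁻¹) * (w + ε⁻¹)) = (ε * u + 1) * (ε * w + 1) := by
  field_simp

theorem tendsto_sq_mul_add_inv_mul_add_inv {𝕜 : Type*} [Field 𝕜] [TopologicalSpace 𝕜]
    [IsTopologicalRing 𝕜] (u w : 𝕜) :
    Tendsto (fun ε : 𝕜 => ε ^ 2 * ((u + ε⁻¹) * (w + ε⁻¹))) (𝓝[≠] 0) (𝓝 1) := by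
  have hcont : Continuous fun ε : 𝕜 => (ε * u + 1) * (ε * w + 1) := by fun_prop
  have hlim := (hcont.tendsto 0).mono_left (nhdsWithin_le_nhds (s := {0}ᶜ))
  simp only [zero_mul, zero_add, mul_one] at hlim
  refine hlim.congr' ?_
  filter_upwards [self_mem_nhdsWithin] with ε hε
  exact (sq_mul_add_inv_mul_add_inv hε u w).symm

theorem eq_of_tendsto_punctured_of_seq {𝕜 X : Type*} [TopologicalSpace 𝕜] [TopologicalSpace X]
    [T2Space X] {F : 𝕜 → X} {a : 𝕜} {L c : X} (hF : Tendsto F (𝓝[≠] a) (𝓝 L))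
    {s : ℕ → 𝕜} (hs : Tendsto s atTop (𝓝 a)) (hsa : ∀ n, s n ≠ a) (hFs : ∀ n, F (s n) = c) :
    L = c := by
  have hs' : Tendsto s atTop (𝓝[≠] a) :=
    tendsto_nhdsWithin_iff.2 ⟨hs, Eventually.of_forall hsa⟩
  refine tendsto_nhds_unique (hF.comp hs') ?_
  simp only [Function.comp_def, hFs, tendsto_const_nhds]

theorem dE7_to_dE6_first_equation_general
    (δ a₁ a₂ b₁ b₂ b₃ b₄ : ℂ) (f g gcheck : ℂ)
    (B : ℂ → ℂ)
    (a₃ε a₄ε vε : ℂ → ℂ) (Aε : ℂ → ℂ → ℂ)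
    (ha₄ : ∀ ε : ℂ, ε ≠ 0 → a₄ε ε = -1 / ε)
    (ha₃ : ∀ ε : ℂ, ε ≠ 0 → a₃ε ε = -1 / ε + a₁ - a₂ + b₁ + b₂ - b₃ + b₄ + δ)
    (hvε : ∀ ε : ℂ, ε ≠ 0 → vε ε = a₁ + a₄ε ε - b₃)
    (hAε : ∀ (ε : ℂ), ε ≠ 0 → ∀ x : ℂ,
        Aε ε x = (x - a₁) * (x - a₂) * (x - a₃ε ε) * (x - a₄ε ε)) :
    (∀ ε : ℂ, ε ≠ 0 → a₁ - a₂ - a₃ε ε + a₄ε ε + b₁ + b₂ - b₃ + b₄ + δ = 0)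
    ∧ Tendsto
        (fun ε : ℂ => ε ^ 2 * ((f - g - vε ε) * (f - gcheck - vε ε - δ) * B f
            - (f - g) * (f - gcheck) * Aε ε f))
        (𝓝[≠] (0 : ℂ))
        (𝓝 (B f - (f - g) * (f - gcheck) * (f - a₁) * (f - a₂)))
    ∧ (∀ εseq : ℕ → ℂ, Tendsto εseq atTop (𝓝 (0 : ℂ)) → (∀ n, εseq n ≠ 0) →
        (∀ n, (f - g - vε (εseq n)) * (f - gcheck - vε (εseq n) - δ) * B f
            = (f - g) * (f - gcheck) * Aε (εseq n) f) →
        (f - g) * (f - gcheck) * ((f - a₁) * (f - a₂)) = B f) := by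
  set c := a₁ - a₂ + b₁ + b₂ - b₃ + b₄ + δ
  set K := (f - g) * (f - gcheck) * (f - a₁) * (f - a₂)
  have hlim : Tendsto
      (fun ε : ℂ => ε ^ 2 * ((f - g - vε ε) * (f - gcheck - vε ε - δ) * B f
          - (f - g) * (f - gcheck) * Aε ε f)) (𝓝[≠] 0) (𝓝 (B f - K)) := by
    have h := ((tendsto_sq_mul_add_inv_mul_add_inv (f - g - a₁ + b₃)
      (f - gcheck - a₁ + b₃ - δ)).mul_const (B f)).sub
      ((tendsto_sq_mul_add_inv_mul_add_inv (f - c) f).const_mul K)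
    rw [one_mul, mul_one] at h
    refine h.congr' ?_
    filter_upwards [self_mem_nhdsWithin] with ε hε
    rw [hvε ε hε, hAε ε hε f, ha₃ ε hε, ha₄ ε hε]
    ring
  refine ⟨fun ε hε => by rw [ha₃ ε hε, ha₄ ε hε]; ring, hlim, fun εseq hseq hne heq => ?_⟩
  have hK := eq_of_tendsto_punctured_of_seq hlim hseq hne fun n => by
    rw [heq n, sub_self, mul_zero]
  linear_combination -hK

/-- degeneration of the first d-E₇⁽¹⁾ evolution equation to the first
d-E₆⁽¹⁾ evolution equation in the limit `ε → 0`. -/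
theorem dE7_to_dE6_first_equation
    (δ a₁ a₂ b₁ b₂ b₃ b₄ : ℂ) (f g gcheck : ℂ)
    (B : ℂ → ℂ)
    (hB : ∀ x, B x = (x - b₁) * (x - b₂) * (x - b₃) * (x - b₄))
    (a₃ε a₄ε vε : ℂ → ℂ) (Aε : ℂ → ℂ → ℂ)
    (ha₄ : ∀ ε : ℂ, ε ≠ 0 → a₄ε ε = -1 / ε)
    (ha₃ : ∀ ε : ℂ, ε ≠ 0 → a₃ε ε = -1 / ε + a₁ - a₂ + b₁ + b₂ - b₃ + b₄ + δ)
    (hvε : ∀ ε : ℂ, ε ≠ 0 → vε ε = a₁ + a₄ε ε - b₃)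
    (hAε : ∀ (ε : ℂ), ε ≠ 0 → ∀ x : ℂ,
        Aε ε x = (x - a₁) * (x - a₂) * (x - a₃ε ε) * (x - a₄ε ε)) :
    (∀ ε : ℂ, ε ≠ 0 → a₁ - a₂ - a₃ε ε + a₄ε ε + b₁ + b₂ - b₃ + b₄ + δ = 0)
    ∧ Tendsto
        (fun ε : ℂ => ε ^ 2 * ((f - g - vε ε) * (f - gcheck - vε ε - δ) * B f
            - (f - g) * (f - gcheck) * Aε ε f))
        (𝓝[≠] (0 : ℂ))
        (𝓝 (B f - (f - g) * (f - gcheck) * (f - a₁) * (f - a₂)))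
    ∧ (∀ εseq : ℕ → ℂ, Tendsto εseq atTop (𝓝 (0 : ℂ)) → (∀ n, εseq n ≠ 0) →
        (∀ n, (f - g - vε (εseq n)) * (f - gcheck - vε (εseq n) - δ) * B f
            = (f - g) * (f - gcheck) * Aε (εseq n) f) →
        (f - g) * (f - gcheck) * ((f - a₁) * (f - a₂)) = B f) :=
  dE7_to_dE6_first_equation_general δ a₁ a₂ b₁ b₂ b₃ b₄ f g gcheck B a₃ε a₄ε vε Aε ha₄ ha₃ hvε hAε
end

section
/- For ε ≠ 0 put a₄(ε) = -1/ε, a₃(ε) = -1/ε + a₁ - a₂ + b₁ + b₂ - b₃ + b₄ + δ, v(ε) = a₁ + a₄(ε) - b₃, and A_ε(x) = (x-a₁)(x-a₂)(x-a₃(ε))(x-a₄(ε)). Set u₁ = a₂-b₁-b₂-b₄-δ and u₂ = a₁-b₃. Then lim_{ε→0} ε²·[ (f-g-v(ε))·(f̄-g-v(ε)+δ)·B(g) - (f-g)(f̄-g)·A_ε(g+v(ε)) ] = B(g) - (f-g)(f̄-g)·(g+u₁)(g+u₂). In particular, if along some sequence εₙ → 0 with εₙ ≠ 0 the second d-E₇⁽¹⁾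 equation (f-g-v(εₙ))(f̄-g-v(εₙ)+δ)·B(g) = (f-g)(f̄-g)·A_{εₙ}(g+v(εₙ)) holds, then the second d-E₆⁽¹⁾ equation (f-g)(f̄-g)·(g+u₁)(g+u₂) = B(g) holds. -/
open Filter Topology

/-!
Substituting `v(ε) = a₁ - b₃ - 1/ε` shows that `g + v(ε) - a₃(ε) = g + u₁` and
`g + v(ε) - a₄(ε) = g + u₂` exactly, while each of the four remaining factors
`f - g - v(ε)`, `f̄ - g - v(ε) + δ`, `g + v(ε) - a₁`, `g + v(ε) - a₂` has the form
`c ± 1/ε`, so that `ε (c ± 1/ε) → ±1`. Multiplying by `ε²` therefore leaves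
`B(g) - (f - g)(f̄ - g)(g + u₁)(g + u₂)` in the limit; along a sequence on which the
d-E₇⁽¹⁾ equation holds the rescaled expression vanishes identically, so this limit is `0`.
-/

theorem tendsto_mul_add_div_nhdsNE {𝕜 : Type*} [NormedField 𝕜] (c k : 𝕜) :
    Tendsto (fun ε : 𝕜 => ε * (c + k / ε)) (𝓝[≠] 0) (𝓝 k) := by
  have hlin : Tendsto (fun ε : 𝕜 => ε * c + k) (𝓝[≠] 0) (𝓝 k) :=
    (Continuous.tendsto' (by fun_prop) 0 k (by simp)).mono_left nhdsWithin_le_nhds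
  refine hlin.congr' ?_
  filter_upwards [self_mem_nhdsWithin] with ε (hε : ε ≠ 0)
  field_simp

theorem eq_of_tendsto_nhdsNE_of_seq {X Y : Type*} [TopologicalSpace X] [TopologicalSpace Y]
    [T2Space Y] {F : X → Y} {a : X} {L c : Y} (hF : Tendsto F (𝓝[≠] a) (𝓝 L))
    {u : ℕ → X} (hu : Tendsto u atTop (𝓝 a)) (hua : ∀ n, u n ≠ a) (hFu : ∀ n, F (u n) = c) :
    L = c := by
  have hu' : Tendsto u atTop (𝓝[≠] a) :=
    tendsto_nhdsWithin_of_tendsto_nhds_of_eventually_within _ hu (Eventually.of_forall hua)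
  have hconst : Tendsto (F ∘ u) atTop (𝓝 c) := by
    simp [Function.comp_def, hFu]
  exact tendsto_nhds_unique (hF.comp hu') hconst

theorem dE7_to_dE6_second_equation_general
    (δ a₁ a₂ b₁ b₂ b₃ b₄ : ℂ) (f g fbar : ℂ)
    (B : ℂ → ℂ)
    (u₁ u₂ : ℂ) (hu₁ : u₁ = a₂ - b₁ - b₂ - b₄ - δ) (hu₂ : u₂ = a₁ - b₃)
    (a₃ε a₄ε vε : ℂ → ℂ) (Aε : ℂ → ℂ → ℂ)
    (ha₄ : ∀ ε : ℂ, ε ≠ 0 → a₄ε ε = -1 / ε)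
    (ha₃ : ∀ ε : ℂ, ε ≠ 0 → a₃ε ε = -1 / ε + a₁ - a₂ + b₁ + b₂ - b₃ + b₄ + δ)
    (hvε : ∀ ε : ℂ, ε ≠ 0 → vε ε = a₁ + a₄ε ε - b₃)
    (hAε : ∀ (ε : ℂ), ε ≠ 0 → ∀ x : ℂ,
        Aε ε x = (x - a₁) * (x - a₂) * (x - a₃ε ε) * (x - a₄ε ε)) :
    Tendsto
      (fun ε : ℂ => ε ^ 2 * ((f - g - vε ε) * (fbar - g - vε ε + δ) * B g
          - (f - g) * (fbar - g) * Aε ε (g + vε ε)))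
      (𝓝[≠] (0 : ℂ))
      (𝓝 (B g - (f - g) * (fbar - g) * ((g + u₁) * (g + u₂))))
    ∧ (∀ εseq : ℕ → ℂ, Tendsto εseq atTop (𝓝 (0 : ℂ)) → (∀ n, εseq n ≠ 0) →
        (∀ n, (f - g - vε (εseq n)) * (fbar - g - vε (εseq n) + δ) * B g
            = (f - g) * (fbar - g) * Aε (εseq n) (g + vε (εseq n))) →
        (f - g) * (fbar - g) * ((g + u₁) * (g + u₂)) = B g) := by
  have hrescaled : ∀ ε : ℂ, ε ≠ 0 →
      ε * (f - g - a₁ + b₃ + 1 / ε) * (ε * (fbar - g - a₁ + b₃ + δ + 1 / ε)) * B g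
        - (f - g) * (fbar - g) * (ε * (g - b₃ + -1 / ε) * (ε * (g + a₁ - a₂ - b₃ + -1 / ε))
          * ((g + u₁) * (g + u₂)))
      = ε ^ 2 * ((f - g - vε ε) * (fbar - g - vε ε + δ) * B g
          - (f - g) * (fbar - g) * Aε ε (g + vε ε)) := by
    intro ε hε
    rw [hAε ε hε, hvε ε hε, ha₄ ε hε, ha₃ ε hε, hu₁, hu₂]
    field_simp
    ring
  have hlim := ((((tendsto_mul_add_div_nhdsNE (f - g - a₁ + b₃) 1).mul
    (tendsto_mul_add_div_nhdsNE (fbar - g - a₁ + b₃ + δ) 1)).mul tendsto_const_nhds).sub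
    (tendsto_const_nhds.mul (((tendsto_mul_add_div_nhdsNE (g - b₃) (-1)).mul
      (tendsto_mul_add_div_nhdsNE (g + a₁ - a₂ - b₃) (-1))).mul tendsto_const_nhds))).congr'
    (eventually_nhdsWithin_of_forall hrescaled)
  norm_num at hlim
  refine ⟨hlim, fun εseq hεseq hne hE7 => ?_⟩
  have hzero := eq_of_tendsto_nhdsNE_of_seq (c := 0) hlim hεseq hne (fun n => by simp [hE7 n])
  exact (sub_eq_zero.mp hzero).symm

/-- degeneration of the second d-E₇⁽¹⁾ evolution equation to the second
d-E₆⁽¹⁾ evolution equation in the limit `ε → 0`. -/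
theorem dE7_to_dE6_second_equation
    (δ a₁ a₂ b₁ b₂ b₃ b₄ : ℂ) (f g fbar : ℂ)
    (B : ℂ → ℂ)
    (hB : ∀ x, B x = (x - b₁) * (x - b₂) * (x - b₃) * (x - b₄))
    (u₁ u₂ : ℂ) (hu₁ : u₁ = a₂ - b₁ - b₂ - b₄ - δ) (hu₂ : u₂ = a₁ - b₃)
    (a₃ε a₄ε vε : ℂ → ℂ) (Aε : ℂ → ℂ → ℂ)
    (ha₄ : ∀ ε : ℂ, ε ≠ 0 → a₄ε ε = -1 / ε)
    (ha₃ : ∀ ε : ℂ, ε ≠ 0 → a₃ε ε = -1 / ε + a₁ - a₂ + b₁ + b₂ - b₃ + b₄ + δ)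
    (hvε : ∀ ε : ℂ, ε ≠ 0 → vε ε = a₁ + a₄ε ε - b₃)
    (hAε : ∀ (ε : ℂ), ε ≠ 0 → ∀ x : ℂ,
        Aε ε x = (x - a₁) * (x - a₂) * (x - a₃ε ε) * (x - a₄ε ε)) :
    Tendsto
      (fun ε : ℂ => ε ^ 2 * ((f - g - vε ε) * (fbar - g - vε ε + δ) * B g
          - (f - g) * (fbar - g) * Aε ε (g + vε ε)))
      (𝓝[≠] (0 : ℂ))
      (𝓝 (B g - (f - g) * (fbar - g) * ((g + u₁) * (g + u₂))))
    ∧ (∀ εseq : ℕ → ℂ, Tendsto εseq atTop (𝓝 (0 : ℂ)) → (∀ n, εseq n ≠ 0) →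
        (∀ n, (f - g - vε (εseq n)) * (fbar - g - vε (εseq n) + δ) * B g
            = (f - g) * (fbar - g) * Aε (εseq n) (g + vε (εseq n))) →
        (f - g) * (fbar - g) * ((g + u₁) * (g + u₂)) = B g) :=
  dE7_to_dE6_second_equation_general δ a₁ a₂ b₁ b₂ b₃ b₄ f g fbar B u₁ u₂ hu₁ hu₂ a₃ε a₄ε vε Aε ha₄
    ha₃ hvε hAε
end

section
/- For ε ≠ 0 put b₃(ε) = -1/ε, b₄(ε) = -1/(εt), g_ε = -1/(gε), ǧ_ε = -1/(ǧε) and B_ε(x) = (x-b₁)(x-b₂)(x-b₃(ε))(x-b₄(ε)). Then lim_{ε→0} ε²·t·g·ǧ·[ (f-g_ε)(f-ǧ_ε)·(f-a₁)(f-a₂) - B_ε(f) ] = t·(f-a₁)(f-a₂) - g·ǧ·(f-b₁)(f-b₂). In particular, if along some sequence εₙ → 0 with εₙ ≠ 0 the first d-E₆⁽¹⁾ equation (f-g_{εₙ})(f-ǧ_{εₙ})·(f-a₁)(f-a₂) = B_{εₙ}(f) holds, then the first d-D₄⁽¹⁾ equation g·ǧ·(f-b₁)(f-b₂) = t·(f-a₁)(f-a₂)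 holds. -/
open Filter Topology

/-!
Multiplying the d-E₆⁽¹⁾ defect by `ε² t g ǧ` clears every pole in `ε`: each factor
`f + 1/(cε)` becomes `cεf + 1`, so the rescaled defect is a polynomial in `ε`, and its
limit is its value at `ε = 0`. Along a sequence on which the d-E₆⁽¹⁾ equation holds the
rescaled defect vanishes identically, so its limit, the d-D₄⁽¹⁾ defect, vanishes.
-/

theorem rescaled_dE6_defect_eq {t g gcheck ε : ℂ} (ht : t ≠ 0) (hg : g ≠ 0)
    (hgcheck : gcheck ≠ 0) (hε : ε ≠ 0) (f b₁ b₂ A : ℂ) :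
    ε ^ 2 * t * g * gcheck
        * ((f - -1 / (g * ε)) * (f - -1 / (gcheck * ε)) * A
          - (f - b₁) * (f - b₂) * (f - -1 / ε) * (f - -1 / (ε * t)))
      = t * (g * ε * f + 1) * (gcheck * ε * f + 1) * A
          - g * gcheck * (ε * f + 1) * (t * ε * f + 1) * ((f - b₁) * (f - b₂)) := by
  field_simp
  ring

theorem ContinuousAt.tendsto_nhdsNE_of_eventuallyEq {X Y : Type*} [TopologicalSpace X]
    [TopologicalSpace Y] {F P : X → Y} {a : X} (hP : ContinuousAt P a)
    (hFP : F =ᶠ[𝓝[≠] a] P) : Tendsto F (𝓝[≠] a) (𝓝 (P a)) :=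
  (hP.tendsto.mono_left nhdsWithin_le_nhds).congr' hFP.symm

theorem Filter.Tendsto.limit_eq_of_seq_eq {X Y : Type*} [TopologicalSpace X]
    [TopologicalSpace Y] [T2Space Y] {F : X → Y} {a : X} {L c : Y}
    (hF : Tendsto F (𝓝[≠] a) (𝓝 L)) {u : ℕ → X} (hu : Tendsto u atTop (𝓝 a))
    (hne : ∀ n, u n ≠ a) (hc : ∀ n, F (u n) = c) : L = c := by
  have hu' : Tendsto u atTop (𝓝[≠] a) :=
    tendsto_nhdsWithin_of_tendsto_nhds_of_eventually_within _ hu (Eventually.of_forall hne)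
  refine tendsto_nhds_unique (hF.comp hu') ?_
  simpa only [Function.comp_def, hc] using tendsto_const_nhds

theorem dE6_to_dD4_first_equation_general
    (a₁ a₂ b₁ b₂ : ℂ) (t : ℂ) (ht : t ≠ 0)
    (f g gcheck : ℂ) (hg : g ≠ 0) (hgcheck : gcheck ≠ 0)
    (b₃ε b₄ε gε gcheckε : ℂ → ℂ) (Bε : ℂ → ℂ → ℂ)
    (hb₃ : ∀ ε : ℂ, ε ≠ 0 → b₃ε ε = -1 / ε)
    (hb₄ : ∀ ε : ℂ, ε ≠ 0 → b₄ε ε = -1 / (ε * t))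
    (hgε : ∀ ε : ℂ, ε ≠ 0 → gε ε = -1 / (g * ε))
    (hgcheckε : ∀ ε : ℂ, ε ≠ 0 → gcheckε ε = -1 / (gcheck * ε))
    (hBε : ∀ (ε : ℂ), ε ≠ 0 → ∀ x : ℂ,
        Bε ε x = (x - b₁) * (x - b₂) * (x - b₃ε ε) * (x - b₄ε ε)) :
    Tendsto
      (fun ε : ℂ => ε ^ 2 * t * g * gcheck
          * ((f - gε ε) * (f - gcheckε ε) * ((f - a₁) * (f - a₂)) - Bε ε f))
      (𝓝[≠] (0 : ℂ))
      (𝓝 (t * ((f - a₁) * (f - a₂)) - g * gcheck * ((f - b₁) * (f - b₂))))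
    ∧ (∀ εseq : ℕ → ℂ, Tendsto εseq atTop (𝓝 (0 : ℂ)) → (∀ n, εseq n ≠ 0) →
        (∀ n, (f - gε (εseq n)) * (f - gcheckε (εseq n)) * ((f - a₁) * (f - a₂))
            = Bε (εseq n) f) →
        g * gcheck * ((f - b₁) * (f - b₂)) = t * ((f - a₁) * (f - a₂))) := by
  set P : ℂ → ℂ := fun ε =>
    t * (g * ε * f + 1) * (gcheck * ε * f + 1) * ((f - a₁) * (f - a₂))
      - g * gcheck * (ε * f + 1) * (t * ε * f + 1) * ((f - b₁) * (f - b₂))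
  have hP : ContinuousAt P 0 := by fun_prop
  have hP0 : P 0 = t * ((f - a₁) * (f - a₂)) - g * gcheck * ((f - b₁) * (f - b₂)) := by
    simp only [P]; ring
  have hlim : Tendsto (fun ε : ℂ => ε ^ 2 * t * g * gcheck
      * ((f - gε ε) * (f - gcheckε ε) * ((f - a₁) * (f - a₂)) - Bε ε f))
      (𝓝[≠] (0 : ℂ)) (𝓝 (P 0)) := by
    refine hP.tendsto_nhdsNE_of_eventuallyEq ?_
    filter_upwards [self_mem_nhdsWithin] with ε hε
    rw [hBε ε hε, hb₃ ε hε, hb₄ ε hε, hgε ε hε, hgcheckε ε hε]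
    exact rescaled_dE6_defect_eq ht hg hgcheck hε f b₁ b₂ _
  refine ⟨hP0 ▸ hlim, fun εseq hseq hne hE6 => ?_⟩
  have hD4 : P 0 = 0 := hlim.limit_eq_of_seq_eq hseq hne fun n => by
    simp only [hE6 n, sub_self, mul_zero]
  linear_combination hP0 - hD4

/-- degeneration of the first d-E₆⁽¹⁾ evolution equation to the first
d-D₄⁽¹⁾ evolution equation in the limit `ε → 0`. -/
theorem dE6_to_dD4_first_equation
    (δ a₁ a₂ b₁ b₂ : ℂ) (t : ℂ) (ht : t ≠ 0)
    (f g gcheck : ℂ) (hg : g ≠ 0) (hgcheck : gcheck ≠ 0)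
    (b₃ε b₄ε gε gcheckε : ℂ → ℂ) (Bε : ℂ → ℂ → ℂ)
    (hb₃ : ∀ ε : ℂ, ε ≠ 0 → b₃ε ε = -1 / ε)
    (hb₄ : ∀ ε : ℂ, ε ≠ 0 → b₄ε ε = -1 / (ε * t))
    (hgε : ∀ ε : ℂ, ε ≠ 0 → gε ε = -1 / (g * ε))
    (hgcheckε : ∀ ε : ℂ, ε ≠ 0 → gcheckε ε = -1 / (gcheck * ε))
    (hBε : ∀ (ε : ℂ), ε ≠ 0 → ∀ x : ℂ,
        Bε ε x = (x - b₁) * (x - b₂) * (x - b₃ε ε) * (x - b₄ε ε)) :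
    Tendsto
      (fun ε : ℂ => ε ^ 2 * t * g * gcheck
          * ((f - gε ε) * (f - gcheckε ε) * ((f - a₁) * (f - a₂)) - Bε ε f))
      (𝓝[≠] (0 : ℂ))
      (𝓝 (t * ((f - a₁) * (f - a₂)) - g * gcheck * ((f - b₁) * (f - b₂))))
    ∧ (∀ εseq : ℕ → ℂ, Tendsto εseq atTop (𝓝 (0 : ℂ)) → (∀ n, εseq n ≠ 0) →
        (∀ n, (f - gε (εseq n)) * (f - gcheckε (εseq n)) * ((f - a₁) * (f - a₂))
            = Bε (εseq n) f) →
        g * gcheck * ((f - b₁) * (f - b₂)) = t * ((f - a₁) * (f - a₂))) :=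
  dE6_to_dD4_first_equation_general a₁ a₂ b₁ b₂ t ht f g gcheck hg hgcheck b₃ε b₄ε gε gcheckε Bε hb₃
    hb₄ hgε hgcheckε hBε
end
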